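/- For every n ≥ 5 and every 1 ≤ s ≤ n−1, the complete bipartite graph K_{s,n−s} has metric dimension n−2, and there exists a single edge e in the complement of K_{s,n−s} such that β(K_{s,n−s} + e) = n−3; in particular K_{s,n−s} is reducible. -/

import Mathlib

/-! In `K_{s,t}`, and in `K_{s,t}` with one extra edge, any two distinct non-adjacent vertices
have a common neighbour, so distances are `0`, `1` or `2` and are read off adjacency. Twins
(vertices with the same neighbours apart from each other) are at equal distance from every third
vertex, so a resolving set misses at most one vertex of each twin class. The sides of `K_{s,t}`
are its twin classes, and leaving out one vertex of each side still resolves: `β = n - 2`.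
An edge `b₁b₂` inside a side with at least three vertices splits that side into the twin classes
`{b₁, b₂}` and the rest; leaving out one vertex of each of the three classes still resolves,
since `b₁` is adjacent to exactly one of the two left-out vertices of its side. Hence
`β(K_{s,t} + b₁b₂) = n - 3`, which also bounds the threshold dimension. -/

open SimpleGraph

/-- `W` is a resolving set for `G`: vertices with equal distance vectors to `W` are equal. -/
def IsResolvingSet {V : Type*} (G : SimpleGraph V) (W : Set V) : Prop :=
  ∀ u v : V, (∀ w ∈ W, G.dist w u = G.dist w v) → u = v

/-- The metric dimension of `G`: the least cardinality of a resolving set. -/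
noncomputable def metricDim {V : Type*} [Fintype V] (G : SimpleGraph V) : ℕ :=
  sInf {n | ∃ W : Finset V, W.card = n ∧ IsResolvingSet G ↑W}

/-- The threshold dimension of `G`: the least metric dimension over spanning supergraphs. -/
noncomputable def thresholdDim {V : Type*} [Fintype V] (G : SimpleGraph V) : ℕ :=
  sInf {n | ∃ H : SimpleGraph V, G ≤ H ∧ metricDim H = n}

/-- The strong product of `k` copies of the path on `{0, …, n-1}`. -/
def strongPow (n k : ℕ) : SimpleGraph (Fin k → Fin n) where
  Adj x y := x ≠ y ∧ ∀ i, ((x i : ℤ) - (y i : ℤ)).natAbs ≤ 1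
  symm := ⟨by
    rintro x y ⟨h1, h2⟩
    refine ⟨fun h => h1 h.symm, fun i => ?_⟩
    rw [show (y i : ℤ) - (x i : ℤ) = -((x i : ℤ) - (y i : ℤ)) by ring, Int.natAbs_neg]
    exact h2 i⟩
  loopless := ⟨fun x ⟨h, _⟩ => h rfl⟩

open Sum Finset

namespace SimpleGraph

variable {V V' : Type*} {G : SimpleGraph V} {G' : SimpleGraph V'}

lemma dist_map_le (f : G →g G') {u v : V} (h : G.Reachable u v) :
    G'.dist (f u) (f v) ≤ G.dist u v := by
  obtain ⟨p, hp⟩ := h.exists_walk_length_eq_dist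
  simpa [hp] using G'.dist_le (p.map f)

lemma Iso.dist_eq (e : G ≃g G') (u v : V) : G'.dist (e u) (e v) = G.dist u v := by
  by_cases h : G.Reachable u v
  · refine le_antisymm (dist_map_le e.toHom h) ?_
    simpa using dist_map_le e.symm.toHom (u := e u) (v := e v) (Iso.reachable_iff.2 h)
  · rw [dist_eq_zero_of_not_reachable h,
      dist_eq_zero_of_not_reachable (mt Iso.reachable_iff.1 h)]

lemma dist_eq_two {u v : V} (huv : u ≠ v) (hadj : ¬G.Adj u v)
    (hc : (G.commonNeighbors u v).Nonempty) : G.dist u v = 2 := by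
  simp [dist, edist_eq_two_iff.2 ⟨huv, hadj, hc⟩]

section CommonNeighbors

variable (hG : ∀ u v, u ≠ v → ¬G.Adj u v → (G.commonNeighbors u v).Nonempty)
include hG

lemma connected_of_commonNeighbors_nonempty [Nonempty V] : G.Connected := by
  refine .mk fun u v => ?_
  by_cases huv : u = v
  · exact huv ▸ .refl u
  by_cases hadj : G.Adj u v
  · exact hadj.reachable
  obtain ⟨w, hw⟩ := hG u v huv hadj
  rw [mem_commonNeighbors] at hw
  exact hw.1.reachable.trans hw.2.symm.reachable

lemma dist_eq_ite_of_commonNeighbors_nonempty [DecidableEq V] [DecidableRel G.Adj] (u v : V) :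
    G.dist u v = if u = v then 0 else if G.Adj u v then 1 else 2 := by
  split_ifs with huv hadj
  · simp [huv]
  · exact dist_eq_one_iff_adj.2 hadj
  · exact dist_eq_two huv hadj (hG u v huv hadj)

lemma dist_eq_dist_iff_of_commonNeighbors_nonempty (w u v : V) :
    G.dist w u = G.dist w v ↔ (w = u ↔ w = v) ∧ (G.Adj w u ↔ G.Adj w v) := by
  classical
  rw [dist_eq_ite_of_commonNeighbors_nonempty hG, dist_eq_ite_of_commonNeighbors_nonempty hG]
  by_cases hu : w = u <;> by_cases hv : w = v <;> subst_vars <;> split_ifs <;> simp_all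

end CommonNeighbors

end SimpleGraph

section MetricDim

variable {V V' : Type*} {G : SimpleGraph V} {G' : SimpleGraph V'}

lemma IsResolvingSet.image (e : G ≃g G') {W : Set V} (hW : IsResolvingSet G W) :
    IsResolvingSet G' (e '' W) := by
  intro u v h
  refine e.symm.injective (hW _ _ fun w hw => ?_)
  simpa [← Iso.dist_eq e] using h (e w) ⟨w, hw, rfl⟩

lemma metricDim_congr [Fintype V] [Fintype V'] (e : G ≃g G') : metricDim G = metricDim G' := by
  unfold metricDim
  congr 1
  ext m
  constructor
  · rintro ⟨W, rfl, hW⟩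
    exact ⟨W.map e.toEquiv.toEmbedding, card_map _, by simpa using hW.image e⟩
  · rintro ⟨W, rfl, hW⟩
    exact ⟨W.map e.symm.toEquiv.toEmbedding, card_map _, by simpa using hW.image e.symm⟩

lemma metricDim_eq_of_isResolvingSet [Fintype V] {W : Finset V} {m : ℕ}
    (hW : IsResolvingSet G W) (hcard : #W = m)
    (hmin : ∀ W' : Finset V, IsResolvingSet G W' → m ≤ #W') : metricDim G = m :=
  le_antisymm (Nat.sInf_le ⟨W, hcard, hW⟩)
    (le_csInf ⟨m, W, hcard, hW⟩ fun _ ⟨W', hc, hr⟩ => hc ▸ hmin W' hr)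

lemma isResolvingSet_compl (hG : G.Connected) {S : Set V}
    (h : ∀ u ∈ S, ∀ v ∈ S, u ≠ v → ∃ w ∉ S, G.dist w u ≠ G.dist w v) :
    IsResolvingSet G Sᶜ := by
  intro u v huv
  by_contra hne
  by_cases hu : u ∈ S
  · by_cases hv : v ∈ S
    · obtain ⟨w, hwS, hw⟩ := h u hu v hv hne
      exact hw (huv w hwS)
    · have := huv v hv
      rw [SimpleGraph.dist_self, hG.dist_eq_zero_iff] at this
      exact hne this.symm
  · have := huv u hu
    rw [SimpleGraph.dist_self, eq_comm, hG.dist_eq_zero_iff] at this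
    exact hne this

/-- A resolving set misses at most one vertex of each class of twins. -/
lemma IsResolvingSet.card_sub_le [Fintype V] [DecidableEq V] {κ : Type*} [Fintype κ]
    {W : Finset V} (hW : IsResolvingSet G W) (f : V → κ)
    (htwin : ∀ x y, f x = f y → ∀ w, w ≠ x → w ≠ y → G.dist w x = G.dist w y) :
    Fintype.card V - Fintype.card κ ≤ #W := by
  have hinj : Set.InjOn f ↑Wᶜ := fun x hx y hy hxy =>
    hW x y fun w hw => htwin x y hxy w (by rintro rfl; simp_all) (by rintro rfl; simp_all)
  have := card_le_card_of_injOn f (fun x _ => mem_univ (f x)) hinj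
  have := card_add_card_compl W
  simp only [card_univ] at *
  omega

end MetricDim

section CompleteBipartite

variable {α β : Type*} [Nonempty α] [Nonempty β] {G : SimpleGraph (α ⊕ β)}

lemma commonNeighbors_nonempty_of_completeBipartiteGraph_le
    (hG : completeBipartiteGraph α β ≤ G) {u v : α ⊕ β} (huv : ¬G.Adj u v) :
    (G.commonNeighbors u v).Nonempty := by
  obtain ⟨a⟩ := ‹Nonempty α›
  obtain ⟨b⟩ := ‹Nonempty β›
  rcases u with u | u <;> rcases v with v | v
  · exact ⟨inr b, hG (by simp), hG (by simp)⟩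
  · exact absurd (hG (by simp)) huv
  · exact absurd (hG (by simp)) huv
  · exact ⟨inl a, hG (by simp), hG (by simp)⟩

lemma connected_of_completeBipartiteGraph_le (hG : completeBipartiteGraph α β ≤ G) :
    G.Connected :=
  connected_of_commonNeighbors_nonempty fun _ _ _ =>
    commonNeighbors_nonempty_of_completeBipartiteGraph_le hG

lemma dist_eq_dist_iff_of_completeBipartiteGraph_le (hG : completeBipartiteGraph α β ≤ G)
    (w u v : α ⊕ β) :
    G.dist w u = G.dist w v ↔ (w = u ↔ w = v) ∧ (G.Adj w u ↔ G.Adj w v) :=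
  dist_eq_dist_iff_of_commonNeighbors_nonempty
    (fun _ _ _ => commonNeighbors_nonempty_of_completeBipartiteGraph_le hG) w u v

variable [Fintype α] [Fintype β]

theorem metricDim_completeBipartiteGraph (h : 3 ≤ Fintype.card α + Fintype.card β) :
    metricDim (completeBipartiteGraph α β) = Fintype.card α + Fintype.card β - 2 := by
  classical
  have hdist :=
    dist_eq_dist_iff_of_completeBipartiteGraph_le (le_refl (completeBipartiteGraph α β))
  obtain ⟨a⟩ := ‹Nonempty α›
  obtain ⟨b⟩ := ‹Nonempty β›
  set S : Finset (α ⊕ β) := {inl a, inr b}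
  refine metricDim_eq_of_isResolvingSet (W := Sᶜ) ?_ ?_ fun W hW => ?_
  · obtain ⟨w, -, hw⟩ := exists_mem_notMem_of_card_lt_card (s := S) (t := univ)
      (by simp [S]; omega)
    rw [coe_compl]
    refine isResolvingSet_compl (connected_of_completeBipartiteGraph_le le_rfl)
      fun u hu v hv huv => ⟨w, hw, ?_⟩
    rw [Ne, hdist]
    simp only [S, coe_insert, coe_singleton, Set.mem_insert_iff, Set.mem_singleton_iff]
      at hu hv hw
    rcases w with w | w <;> aesop
  · simp [S, card_compl]
    omega
  · simpa using hW.card_sub_le Sum.isLeft fun x y hxy w hwx hwy => by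
      rw [hdist]
      rcases x with x | x <;> rcases y with y | y <;> rcases w with w | w <;> simp_all

end CompleteBipartite

section CompleteBipartiteSupEdge

variable {α β : Type*} [Fintype α] [Fintype β] [Nonempty α] {b₁ b₂ : β}

lemma card_sub_three_le_of_isResolvingSet_sup_edge_inr {W : Finset (α ⊕ β)}
    (hW : IsResolvingSet (completeBipartiteGraph α β ⊔ edge (inr b₁) (inr b₂)) W) :
    Fintype.card α + Fintype.card β - 3 ≤ #W := by
  classical
  have : Nonempty β := ⟨b₁⟩
  have hdist := dist_eq_dist_iff_of_completeBipartiteGraph_le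
    (G := completeBipartiteGraph α β ⊔ edge (inr b₁) (inr b₂)) le_sup_left
  -- the twin classes `α`, `{b₁, b₂}` and the rest of `β`
  have := hW.card_sub_le (Sum.elim (fun _ => none) fun b => some (decide (b = b₁ ∨ b = b₂)))
    fun x y hxy w hwx hwy => by
      rw [hdist]
      refine ⟨iff_of_false hwx hwy, ?_⟩
      clear hdist
      rcases x with x | x <;> rcases y with y | y <;> rcases w with w | w <;>
        aesop (add simp edge_adj)
  simpa using this

omit [Nonempty α] in
lemma isResolvingSet_compl_completeBipartiteGraph_sup_edge_inr (a : α) {b₃ : β}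
    (hb : b₁ ≠ b₂) (hb₃ : b₃ ≠ b₁ ∧ b₃ ≠ b₂) (h5 : 5 ≤ Fintype.card α + Fintype.card β) :
    IsResolvingSet (completeBipartiteGraph α β ⊔ edge (inr b₁) (inr b₂))
      ({inl a, inr b₂, inr b₃} : Set (α ⊕ β))ᶜ := by
  classical
  have : Nonempty α := ⟨a⟩
  have : Nonempty β := ⟨b₁⟩
  have hdist := dist_eq_dist_iff_of_completeBipartiteGraph_le
    (G := completeBipartiteGraph α β ⊔ edge (inr b₁) (inr b₂)) le_sup_left
  obtain ⟨w, -, hw⟩ := exists_mem_notMem_of_card_lt_card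
    (s := ({inr b₁, inl a, inr b₂, inr b₃} : Finset (α ⊕ β))) (t := univ)
    (by rw [card_univ, Fintype.card_sum]; exact card_le_four.trans_lt (by omega))
  simp only [mem_insert, mem_singleton, not_or] at hw
  have hwS : w ∉ ({inl a, inr b₂, inr b₃} : Set (α ⊕ β)) := by simp; tauto
  have hb₁S : inr b₁ ∉ ({inl a, inr b₂, inr b₃} : Set (α ⊕ β)) := by
    simp [hb, Ne.symm hb₃.1]
  refine isResolvingSet_compl (connected_of_completeBipartiteGraph_le le_sup_left)
    fun u hu v hv huv => ?_
  simp only [Set.mem_insert_iff, Set.mem_singleton_iff] at hu hv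
  -- `inr b₁` separates `inr b₂` from `inr b₃`; the spare vertex `w` separates `inl a` from both.
  rcases hu with rfl | rfl | rfl <;> rcases hv with rfl | rfl | rfl <;>
    first
    | exact absurd rfl huv
    | refine ⟨inr b₁, hb₁S, ?_⟩
      rw [Ne, hdist]
      simp [edge_adj, hb, Ne.symm hb, hb₃.1, hb₃.2]
      done
    | refine ⟨w, hwS, ?_⟩
      rw [Ne, hdist]
      clear hdist
      rcases w with w | w <;> simp_all [edge_adj]

theorem metricDim_completeBipartiteGraph_sup_edge_inr (hb : b₁ ≠ b₂)
    (h3 : 3 ≤ Fintype.card β) (h5 : 5 ≤ Fintype.card α + Fintype.card β) :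
    metricDim (completeBipartiteGraph α β ⊔ edge (inr b₁) (inr b₂)) =
      Fintype.card α + Fintype.card β - 3 := by
  classical
  obtain ⟨a⟩ := ‹Nonempty α›
  obtain ⟨b₃, -, hb₃⟩ := exists_mem_notMem_of_card_lt_card (s := {b₁, b₂}) (t := univ)
    (by rw [card_univ]; exact card_le_two.trans_lt (by omega))
  simp only [mem_insert, mem_singleton, not_or] at hb₃
  refine metricDim_eq_of_isResolvingSet (W := {inl a, inr b₂, inr b₃}ᶜ) ?_ ?_ fun _ =>
    card_sub_three_le_of_isResolvingSet_sup_edge_inr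
  · rw [coe_compl, coe_insert, coe_insert, coe_singleton]
    exact isResolvingSet_compl_completeBipartiteGraph_sup_edge_inr a hb hb₃ h5
  · rw [card_compl, Fintype.card_sum, card_insert_of_notMem (by simp),
      card_pair (by simpa using Ne.symm hb₃.2)]

omit [Nonempty α] in
theorem metricDim_completeBipartiteGraph_sup_edge_inl [Nonempty β] {a₁ a₂ : α} (ha : a₁ ≠ a₂)
    (h3 : 3 ≤ Fintype.card α) (h5 : 5 ≤ Fintype.card α + Fintype.card β) :
    metricDim (completeBipartiteGraph α β ⊔ edge (inl a₁) (inl a₂)) =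
      Fintype.card α + Fintype.card β - 3 := by
  let e : completeBipartiteGraph α β ⊔ edge (inl a₁) (inl a₂) ≃g
      completeBipartiteGraph β α ⊔ edge (inr a₁) (inr a₂) :=
    ⟨Equiv.sumComm α β, by rintro (x | x) (y | y) <;> simp [edge_adj]⟩
  rw [metricDim_congr e, metricDim_completeBipartiteGraph_sup_edge_inr ha h3 (by omega),
    add_comm]

end CompleteBipartiteSupEdge

/-- For `n ≥ 5` and `1 ≤ s ≤ n - 1`, `β(K_{s,n-s}) = n - 2`, a single edge can be added to
lower the dimension to `n - 3`, and `K_{s,n-s}` is reducible. -/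
theorem completeBipartite_reducible (n s : ℕ) (hn : 5 ≤ n) (hs1 : 1 ≤ s) (hs2 : s ≤ n - 1) :
    metricDim (completeBipartiteGraph (Fin s) (Fin (n - s))) = n - 2 ∧
    (∃ u v : Fin s ⊕ Fin (n - s), u ≠ v ∧
      ¬ (completeBipartiteGraph (Fin s) (Fin (n - s))).Adj u v ∧
      metricDim (completeBipartiteGraph (Fin s) (Fin (n - s)) ⊔
        fromEdgeSet {Sym2.mk u v}) = n - 3) ∧
    thresholdDim (completeBipartiteGraph (Fin s) (Fin (n - s))) <
      metricDim (completeBipartiteGraph (Fin s) (Fin (n - s))) := by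
  have : NeZero s := ⟨by omega⟩
  have : NeZero (n - s) := ⟨by omega⟩
  have hcard : Fintype.card (Fin s) + Fintype.card (Fin (n - s)) = n := by simp; omega
  have hdim : metricDim (completeBipartiteGraph (Fin s) (Fin (n - s))) = n - 2 := by
    rw [metricDim_completeBipartiteGraph (by omega), hcard]
  obtain ⟨u, v, huv, hadj, hdim_edge⟩ : ∃ u v : Fin s ⊕ Fin (n - s), u ≠ v ∧
      ¬ (completeBipartiteGraph (Fin s) (Fin (n - s))).Adj u v ∧
      metricDim (completeBipartiteGraph (Fin s) (Fin (n - s)) ⊔ edge u v) = n - 3 := by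
    rcases le_or_gt 3 (n - s) with ht | ht
    · refine ⟨inr ⟨0, by omega⟩, inr ⟨1, by omega⟩, by simp, by simp, ?_⟩
      rw [metricDim_completeBipartiteGraph_sup_edge_inr (by simp) (by simpa) (by omega), hcard]
    · refine ⟨inl ⟨0, by omega⟩, inl ⟨1, by omega⟩, by simp, by simp, ?_⟩
      rw [metricDim_completeBipartiteGraph_sup_edge_inl (by simp) (by simp; omega) (by omega),
        hcard]
  refine ⟨hdim, ⟨u, v, huv, hadj, hdim_edge⟩, ?_⟩
  calc thresholdDim (completeBipartiteGraph (Fin s) (Fin (n - s))) ≤ n - 3 :=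
        Nat.sInf_le ⟨_, le_sup_left, hdim_edge⟩
    _ < _ := by omega
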